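/- arXiv:1706.02115 — 4 statements merged into one kernel-verified Lean document; each statement's English description precedes it below -/
import Mathlib

section
/- Let l ≥ 1 be an integer and define r_j for integers j ≥ 0 by r_j² = ((1+j)/π²)·( (j(2+j)²)^{1/3} + (j²(2+j))^{1/3} ) (so r_0 = 0). If r satisfies r_{l-1} < r < r_l, then l is the unique minimizer of the map l' ↦ (π² + l'(l'+1)/r²)³ / (l'(l'+1)/r²) over positive integers; that is, for every positive integer l' ≠ l, (π² + l(l+1)/r²)³ / (l(l+1)/r²) < (π² + l'(l'+1)/r²)³ / (l'(l'+1)/r²). -/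
open Real

/-- The critical aspect ratios: `r_j² = ((1+j)/π²)·( (j(2+j)²)^{1/3} + (j²(2+j))^{1/3} )`,
so `r_j` is the (nonnegative) square root of that quantity; in particular `r_0 = 0`. -/
noncomputable def rCrit (j : ℕ) : ℝ :=
  Real.sqrt (((1 + (j : ℝ)) / π ^ 2) *
    (((j : ℝ) * (2 + (j : ℝ)) ^ 2) ^ ((1 : ℝ) / 3) + ((j : ℝ) ^ 2 * (2 + (j : ℝ))) ^ ((1 : ℝ) / 3)))

noncomputable def cbA (n : ℕ) : ℝ := ((n : ℝ) * ((n : ℝ) + 1)) ^ ((1:ℝ)/3)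

noncomputable def Sq (j : ℕ) : ℝ :=
  ((j : ℝ) * (2 + (j : ℝ)) ^ 2) ^ ((1 : ℝ) / 3) + ((j : ℝ) ^ 2 * (2 + (j : ℝ))) ^ ((1 : ℝ) / 3)

lemma rCrit_eq (j : ℕ) : rCrit j = Real.sqrt (((1 + (j : ℝ)) / π ^ 2) * Sq j) := rfl

lemma cbrt_cube (x : ℝ) (hx : 0 ≤ x) : (x ^ (3:ℕ)) ^ ((1:ℝ)/3) = x := by
  rw [show (1:ℝ)/3 = ((3:ℕ):ℝ)⁻¹ by norm_num, Real.pow_rpow_inv_natCast hx (by norm_num)]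

lemma cbrt_sq_mul (u v : ℝ) (hu : 0 ≤ u) (hv : 0 ≤ v) :
    (u^((1:ℝ)/3))^2 * v^((1:ℝ)/3) = (u^2*v)^((1:ℝ)/3) := by
  rw [Real.mul_rpow (by positivity) hv, ← Real.rpow_natCast (u^((1:ℝ)/3)) 2,
    ← Real.rpow_mul hu, ← Real.rpow_natCast u 2, ← Real.rpow_mul hu]
  norm_num

lemma cbrt_mul_sq (u v : ℝ) (hu : 0 ≤ u) (hv : 0 ≤ v) :
    u^((1:ℝ)/3) * (v^((1:ℝ)/3))^2 = (u*v^2)^((1:ℝ)/3) := by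
  rw [Real.mul_rpow hu (by positivity), ← Real.rpow_natCast (v^((1:ℝ)/3)) 2,
    ← Real.rpow_mul hv, ← Real.rpow_natCast v 2, ← Real.rpow_mul hv]
  norm_num

lemma cbA_nonneg (n : ℕ) : 0 ≤ cbA n := Real.rpow_nonneg (by positivity) _

lemma cbA_cube (n : ℕ) : (cbA n) ^ 3 = (n : ℝ) * ((n : ℝ) + 1) := by
  unfold cbA
  rw [← Real.rpow_natCast (((n:ℝ) * ((n:ℝ)+1)) ^ ((1:ℝ)/3)) 3,
    ← Real.rpow_mul (by positivity)]
  norm_num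

lemma cbA_pos (n : ℕ) (hn : 1 ≤ n) : 0 < cbA n := by
  apply Real.rpow_pos_of_pos
  have : (1:ℝ) ≤ (n:ℝ) := by exact_mod_cast hn
  nlinarith

lemma cbA_succ (n : ℕ) : cbA (n+1) = (((n:ℝ)+1) * (((n:ℝ)+1) + 1)) ^ ((1:ℝ)/3) := by
  unfold cbA; push_cast; ring_nf

lemma cbA_lt (n : ℕ) : cbA n < cbA (n+1) := by
  apply Real.rpow_lt_rpow (by positivity) _ (by norm_num)
  push_cast; nlinarith [Nat.cast_nonneg (α := ℝ) n]

lemma cbA_mono {m n : ℕ} (h : m ≤ n) : cbA m ≤ cbA n := by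
  apply Real.rpow_le_rpow (by positivity) _ (by norm_num)
  have h' : (m:ℝ) ≤ (n:ℝ) := by exact_mod_cast h
  nlinarith [Nat.cast_nonneg (α := ℝ) m]

noncomputable def gq (n : ℕ) : ℝ := cbA n * cbA (n+1) * (cbA n + cbA (n+1))

lemma gq_mono {m n : ℕ} (h : m ≤ n) : gq m ≤ gq n := by
  unfold gq
  have h1 := cbA_mono h
  have h2 := cbA_mono (Nat.succ_le_succ h)
  have n1 := cbA_nonneg m
  have n2 := cbA_nonneg (m+1)
  have n3 := cbA_nonneg n
  have n4 := cbA_nonneg (n+1)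
  have e1 : cbA m ^ 2 * cbA (m+1) ≤ cbA n ^ 2 * cbA (n+1) :=
    mul_le_mul (pow_le_pow_left₀ n1 h1 2) h2 n2 (by positivity)
  have e2 : cbA m * cbA (m+1) ^ 2 ≤ cbA n * cbA (n+1) ^ 2 :=
    mul_le_mul h1 (pow_le_pow_left₀ n2 h2 2) (by positivity) n3
  nlinarith

lemma gq_ident (j : ℕ) : gq j = (1 + (j:ℝ)) * Sq j := by
  have hj : (0:ℝ) ≤ (j:ℝ) := Nat.cast_nonneg j
  have key : ∀ w : ℝ, 0 ≤ w →
      ((1 + (j:ℝ)) ^ (3:ℕ) * w) ^ ((1:ℝ)/3) = (1 + (j:ℝ)) * w ^ ((1:ℝ)/3) := by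
    intro w hw
    rw [Real.mul_rpow (by positivity) hw, cbrt_cube _ (by positivity)]
  have e1 : gq j = (cbA j ^ 2 * cbA (j+1)) + (cbA j * cbA (j+1) ^ 2) := by unfold gq; ring
  rw [e1, cbA_succ j]
  unfold cbA Sq
  rw [cbrt_sq_mul _ _ (by positivity) (by positivity),
    cbrt_mul_sq _ _ (by positivity) (by positivity),
    show ((j:ℝ)*((j:ℝ)+1))^2 * (((j:ℝ)+1)*(((j:ℝ)+1)+1)) = (1+(j:ℝ))^(3:ℕ) * ((j:ℝ)^2*(2+(j:ℝ))) by ring,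
    show ((j:ℝ)*((j:ℝ)+1)) * (((j:ℝ)+1)*(((j:ℝ)+1)+1))^2 = (1+(j:ℝ))^(3:ℕ) * ((j:ℝ)*(2+(j:ℝ))^2) by ring,
    key _ (by positivity), key _ (by positivity)]
  ring

lemma gq_gt_of_lt_rCrit {r : ℝ} (hr : 0 ≤ r) (j : ℕ) (h : r < rCrit j) :
    π^2 * r^2 < gq j := by
  rw [rCrit_eq] at h
  have h' := (Real.lt_sqrt hr).mp h
  have hpi : (0:ℝ) < π^2 := by positivity
  calc π^2*r^2 < π^2*((1 + (j:ℝ))/π^2 * Sq j) := by nlinarith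
    _ = (1+(j:ℝ)) * Sq j := by field_simp
    _ = gq j := (gq_ident j).symm

lemma gq_lt_of_rCrit_lt {r : ℝ} (hr : 0 < r) (j : ℕ) (h : rCrit j < r) :
    gq j < π^2 * r^2 := by
  rw [rCrit_eq] at h
  have h' := (Real.sqrt_lt' hr).mp h
  have hpi : (0:ℝ) < π^2 := by positivity
  calc gq j = (1+(j:ℝ)) * Sq j := gq_ident j
    _ = π^2*((1 + (j:ℝ))/π^2 * Sq j) := by field_simp
    _ < π^2*r^2 := by nlinarith

lemma step_lt {r x y : ℝ} (hr : 0 < r) (hx : 0 < x) (hxy : x < y)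
    (h : π^2 * r^2 < x*y*(x+y)) :
    (π^2 + x^3/r^2)^3/(x^3/r^2) < (π^2 + y^3/r^2)^3/(y^3/r^2) := by
  have hy : 0 < y := hx.trans hxy
  have hr2 : 0 < r^2 := by positivity
  have hpi : 0 < π ^ 2 := by positivity
  have hX : 0 < x^3/r^2 := by positivity
  have hY : 0 < y^3/r^2 := by positivity
  have key : (π^2*r^2 + x^3) * y < (π^2*r^2 + y^3) * x := by
    nlinarith [mul_lt_mul_of_pos_right h (sub_pos.mpr hxy)]
  have key3 : ((π^2*r^2 + x^3) * y)^3 < ((π^2*r^2 + y^3) * x)^3 :=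
    pow_lt_pow_left₀ key (by positivity) (by norm_num)
  rw [mul_pow, mul_pow] at key3
  rw [div_lt_div_iff₀ hX hY]
  have e : ∀ z : ℝ, π^2 + z^3/r^2 = (π^2*r^2 + z^3)/r^2 := fun z => by field_simp
  rw [e x, e y, div_pow, div_pow, div_mul_div_comm, div_mul_div_comm,
    div_lt_div_iff₀ (by positivity) (by positivity)]
  nlinarith [mul_lt_mul_of_pos_right key3 (show (0:ℝ) < (r^2)^3 * r^2 by positivity)]

lemma step_gt {r x y : ℝ} (hr : 0 < r) (hx : 0 < x) (hxy : x < y)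
    (h : x*y*(x+y) < π^2 * r^2) :
    (π^2 + y^3/r^2)^3/(y^3/r^2) < (π^2 + x^3/r^2)^3/(x^3/r^2) := by
  have hy : 0 < y := hx.trans hxy
  have hr2 : 0 < r^2 := by positivity
  have hpi : 0 < π ^ 2 := by positivity
  have hX : 0 < x^3/r^2 := by positivity
  have hY : 0 < y^3/r^2 := by positivity
  have key : (π^2*r^2 + y^3) * x < (π^2*r^2 + x^3) * y := by
    nlinarith [mul_lt_mul_of_pos_right h (sub_pos.mpr hxy)]
  have key3 : ((π^2*r^2 + y^3) * x)^3 < ((π^2*r^2 + x^3) * y)^3 :=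
    pow_lt_pow_left₀ key (by positivity) (by norm_num)
  rw [mul_pow, mul_pow] at key3
  rw [div_lt_div_iff₀ hY hX]
  have e : ∀ z : ℝ, π^2 + z^3/r^2 = (π^2*r^2 + z^3)/r^2 := fun z => by field_simp
  rw [e x, e y, div_pow, div_pow, div_mul_div_comm, div_mul_div_comm,
    div_lt_div_iff₀ (by positivity) (by positivity)]
  nlinarith [mul_lt_mul_of_pos_right key3 (show (0:ℝ) < (r^2)^3 * r^2 by positivity)]

noncomputable def Vf (r : ℝ) (n : ℕ) : ℝ :=
  (π ^ 2 + (n : ℝ) * ((n : ℝ) + 1) / r ^ 2) ^ 3 / ((n : ℝ) * ((n : ℝ) + 1) / r ^ 2)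

lemma Vstep_up {r : ℝ} (hr : 0 < r) (n : ℕ) (hn : 1 ≤ n) (h : π^2*r^2 < gq n) :
    Vf r n < Vf r (n+1) := by
  unfold gq at h
  have := step_lt hr (cbA_pos n hn) (cbA_lt n) h
  unfold Vf
  simpa only [cbA_cube, Nat.cast_add, Nat.cast_one] using this

lemma Vstep_down {r : ℝ} (hr : 0 < r) (n : ℕ) (hn : 1 ≤ n) (h : gq n < π^2*r^2) :
    Vf r (n+1) < Vf r n := by
  unfold gq at h
  have := step_gt hr (cbA_pos n hn) (cbA_lt n) h
  unfold Vf
  simpa only [cbA_cube, Nat.cast_add, Nat.cast_one] using this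

lemma chain_up {r : ℝ} (hr : 0 < r) (l : ℕ) (hl : 1 ≤ l) (h : π^2*r^2 < gq l) :
    ∀ d, Vf r l < Vf r (l+d+1) := by
  intro d
  induction d with
  | zero => exact Vstep_up hr l hl h
  | succ d ih =>
    exact ih.trans (Vstep_up hr (l+d+1) (by omega) (lt_of_lt_of_le h (gq_mono (by omega))))

lemma chain_down {r : ℝ} (hr : 0 < r) (l : ℕ) (hl : 1 ≤ l) (h : gq (l-1) < π^2*r^2) :
    ∀ d m, 1 ≤ m → m + d + 1 = l → Vf r l < Vf r m := by
  intro d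
  induction d with
  | zero =>
    intro m hm he
    have step := Vstep_down hr m hm (lt_of_le_of_lt (gq_mono (show m ≤ l-1 by omega)) h)
    rwa [show m+1 = l by omega] at step
  | succ d ih =>
    intro m hm he
    exact (ih (m+1) (by omega) (by omega)).trans
      (Vstep_down hr m hm (lt_of_le_of_lt (gq_mono (show m ≤ l-1 by omega)) h))


/-- If `r_{l-1} < r < r_l`, then `l` is the unique minimizer over the positive integers of
`l' ↦ (π² + l'(l'+1)/r²)³ / (l'(l'+1)/r²)`. -/
theorem unique_critical_integer (l : ℕ) (hl : 1 ≤ l) (r : ℝ)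
    (h1 : rCrit (l - 1) < r) (h2 : r < rCrit l) :
    ∀ l' : ℕ+, (l' : ℕ) ≠ l →
      (π ^ 2 + (l : ℝ) * ((l : ℝ) + 1) / r ^ 2) ^ 3 / ((l : ℝ) * ((l : ℝ) + 1) / r ^ 2) <
      (π ^ 2 + (l' : ℝ) * ((l' : ℝ) + 1) / r ^ 2) ^ 3 / ((l' : ℝ) * ((l' : ℝ) + 1) / r ^ 2) := by
  have hr : 0 < r := lt_of_le_of_lt (Real.sqrt_nonneg _) h1
  have hup : π^2*r^2 < gq l := gq_gt_of_lt_rCrit hr.le l h2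
  have hdown : gq (l-1) < π^2*r^2 := gq_lt_of_rCrit_lt hr (l-1) h1
  intro l' hne
  have hpos : 1 ≤ (l' : ℕ) := l'.one_le
  have main : Vf r l < Vf r (l' : ℕ) := by
    rcases lt_or_gt_of_ne hne with hlt | hgt
    · exact chain_down hr l hl hdown (l - (l':ℕ) - 1) (l':ℕ) hpos (by omega)
    · have := chain_up hr l hl hup ((l':ℕ) - l - 1)
      rwa [show l + ((l':ℕ) - l - 1) + 1 = (l':ℕ) by omega] at this
  unfold Vf at main
  convert main using 3 <;> push_cast <;> ring
end

section
/- Let Le > 0, Pr > 0, R, R̃ real, α > 0, n a positive integer, and σ = R − R̃/Le. If σ > (n²π² + α²)³/α², then the dispersion cubic β³ + b₂β² + b₁β + b₀ has a real root β > 0. -/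
open Real

/-- The constant coefficient `b₀` of the dispersion cubic. -/
noncomputable def dispB0 (Le Pr R Rt α2 : ℝ) (n : ℕ) : ℝ :=
  ((n : ℝ) ^ 2 * π ^ 2 + α2) ^ 3 * Le * Pr - α2 * Pr * (Le * R - Rt)

/-- The linear coefficient `b₁` of the dispersion cubic. -/
noncomputable def dispB1 (Le Pr R Rt α2 : ℝ) (n : ℕ) : ℝ :=
  ((n : ℝ) ^ 2 * π ^ 2 + α2) ^ 2 * (Le + Pr + Le * Pr) -
    α2 * ((n : ℝ) ^ 2 * π ^ 2 + α2)⁻¹ * Pr * (R - Rt)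

/-- The quadratic coefficient `b₂` of the dispersion cubic. -/
noncomputable def dispB2 (Le Pr α2 : ℝ) (n : ℕ) : ℝ :=
  ((n : ℝ) ^ 2 * π ^ 2 + α2) * (1 + Le + Pr)

/-- If `σ = R − R̃/Le > (n²π² + α²)³/α²`, then the dispersion cubic has a real
root `β > 0`. -/
theorem dispersion_positive_root (Le Pr R Rt α : ℝ) (hLe : 0 < Le) (hPr : 0 < Pr)
    (hα : 0 < α) (n : ℕ+) (σ : ℝ) (hσ : σ = R - Rt / Le)
    (hcrit : σ > ((n : ℝ) ^ 2 * π ^ 2 + α ^ 2) ^ 3 / α ^ 2) :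
    ∃ β : ℝ, 0 < β ∧
      β ^ 3 + dispB2 Le Pr (α ^ 2) n * β ^ 2 + dispB1 Le Pr R Rt (α ^ 2) n * β +
        dispB0 Le Pr R Rt (α ^ 2) n = 0 := by
  set b2 := dispB2 Le Pr (α ^ 2) n with hb2def
  set b1 := dispB1 Le Pr R Rt (α ^ 2) n with hb1def
  set b0 := dispB0 Le Pr R Rt (α ^ 2) n with hb0def
  set f : ℝ → ℝ := fun β => β ^ 3 + b2 * β ^ 2 + b1 * β + b0 with hfdef
  -- b0 < 0
  have hα2 : (0:ℝ) < α ^ 2 := by positivity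
  have h1 : ((n : ℝ) ^ 2 * π ^ 2 + α ^ 2) ^ 3 < σ * α ^ 2 := by
    rw [gt_iff_lt, div_lt_iff₀ hα2] at hcrit; exact hcrit
  have hLeσ : Le * σ = Le * R - Rt := by
    rw [hσ]; field_simp
  have hb0 : b0 < 0 := by
    rw [hb0def]; unfold dispB0
    have h2 : α ^ 2 * Pr * (Le * R - Rt) = α ^ 2 * Pr * (Le * σ) := by rw [hLeσ]
    nlinarith [mul_lt_mul_of_pos_left h1 (mul_pos hLe hPr), h2]
  -- choose x large with f x > 0
  set x : ℝ := 1 + |b2| + |b1| + |b0| with hxdef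
  have hx1 : (1:ℝ) ≤ x := by
    have := abs_nonneg b2; have := abs_nonneg b1; have := abs_nonneg b0
    simp only [hxdef]; linarith
  have hx0 : (0:ℝ) < x := by linarith
  have hfx : 0 < f x := by
    simp only [hfdef]
    nlinarith [neg_abs_le b2, neg_abs_le b1, neg_abs_le b0, abs_nonneg b2,
      abs_nonneg b1, abs_nonneg b0, sq_nonneg x, hx1, mul_pos hx0 hx0,
      mul_le_mul_of_nonneg_right (neg_abs_le b2) (le_of_lt (mul_pos hx0 hx0)),
      mul_le_mul_of_nonneg_right (neg_abs_le b1) (le_of_lt hx0)]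
  have hf0 : f 0 = b0 := by simp [hfdef]
  have hcont : ContinuousOn f (Set.Icc 0 x) := by
    apply Continuous.continuousOn; fun_prop
  have hsub := intermediate_value_Ioo (le_of_lt hx0) hcont
  have hmem : (0:ℝ) ∈ Set.Ioo (f 0) (f x) := by
    rw [hf0]; exact ⟨hb0, hfx⟩
  obtain ⟨β, hβmem, hβeq⟩ := hsub hmem
  exact ⟨β, hβmem.1, hβeq⟩
end

section
/- Let Le > 0 with Le ≠ 1, Pr > 0, α > 0, let σ_c = (π² + α²)³/α², and let R, R̃ satisfy R − R̃/Le = σ_c. Then for n = 1 the coefficient b₁ of the dispersion cubic satisfies b₁ = (α²·Pr/(π² + α²))·(|1 − Le|/Le)·K, where K = sign(1 − Le)·[ (Le²/(1 − Le))(1 + 1/Pr)σ_c − R̃ ]. In particular b₁ > 0 if and only if K > 0. -/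
open Real

/-- The parameter `K = sign(1 − Le)·[ (Le²/(1−Le))(1 + 1/Pr)σ_c − R̃ ]` distinguishing
steady from oscillatory convection. -/
noncomputable def Kparam (Le Pr Rt σc : ℝ) : ℝ :=
  Real.sign (1 - Le) * (Le ^ 2 / (1 - Le) * (1 + 1 / Pr) * σc - Rt)

/-- At criticality `R − R̃/Le = σ_c = (π² + α²)³/α²` and for `n = 1`, the coefficient
`b₁` equals `(α²·Pr/(π² + α²))·(|1 − Le|/Le)·K`; in particular `b₁ > 0 ↔ K > 0`. -/
theorem dispersion_b1_at_criticality (Le Pr R Rt α : ℝ) (hLe : 0 < Le) (hLe1 : Le ≠ 1)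
    (hPr : 0 < Pr) (hα : 0 < α) (σc : ℝ) (hσc : σc = (π ^ 2 + α ^ 2) ^ 3 / α ^ 2)
    (hcrit : R - Rt / Le = σc) :
    dispB1 Le Pr R Rt (α ^ 2) 1 =
      (α ^ 2 * Pr / (π ^ 2 + α ^ 2)) * (|1 - Le| / Le) * Kparam Le Pr Rt σc ∧
    (0 < dispB1 Le Pr R Rt (α ^ 2) 1 ↔ 0 < Kparam Le Pr Rt σc) := by
  have hA : (0:ℝ) < π ^ 2 + α ^ 2 := by positivity
  have hA' : π ^ 2 + α ^ 2 ≠ 0 := ne_of_gt hA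
  have hα' : α ≠ 0 := ne_of_gt hα
  have hLe' : Le ≠ 0 := ne_of_gt hLe
  have hPr' : Pr ≠ 0 := ne_of_gt hPr
  have h1 : (1:ℝ) - Le ≠ 0 := sub_ne_zero.mpr (Ne.symm hLe1)
  have hR : R = σc + Rt / Le := by linarith
  have key : dispB1 Le Pr R Rt (α ^ 2) 1 =
      (α ^ 2 * Pr / (π ^ 2 + α ^ 2)) * (|1 - Le| / Le) * Kparam Le Pr Rt σc := by
    rcases lt_or_gt_of_ne hLe1 with h | h
    · have hs : Real.sign (1 - Le) = 1 := Real.sign_of_pos (by linarith)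
      have habs : |1 - Le| = 1 - Le := abs_of_pos (by linarith)
      rw [dispB1, Kparam, hs, habs, hR, hσc]
      push_cast
      field_simp
      ring
    · have hs : Real.sign (1 - Le) = -1 := Real.sign_of_neg (by linarith)
      have habs : |1 - Le| = -(1 - Le) := abs_of_neg (by linarith)
      rw [dispB1, Kparam, hs, habs, hR, hσc]
      push_cast
      field_simp
      ring
  refine ⟨key, ?_⟩
  have habspos : (0:ℝ) < |1 - Le| := abs_pos.mpr (sub_ne_zero.mpr (Ne.symm hLe1))
  have hc : 0 < (α ^ 2 * Pr / (π ^ 2 + α ^ 2)) * (|1 - Le| / Le) := by positivity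
  rw [key]
  exact mul_pos_iff_of_pos_left hc
end

section
/- Let N ≥ 1, β > 0, q > 0, and let x : [0, ∞) → ℂ^N be differentiable, satisfy x_m'(t) = β·x_m(t) − q·x_m(t)·‖x(t)‖² for each component m and all t ≥ 0, and suppose x(0) ≠ 0. Then ‖x(t)‖² → β/q as t → ∞. -/
/-!
The squared norm `y = ‖x‖²` solves the logistic equation `y' = 2(β - q y) y`. Solutions of the
logistic equation are unique, since the difference of two of them solves a linear equation and
Grönwall's inequality applies, so `y` is the explicit solution
`β y₀ / (q y₀ + (β - q y₀) e^{-2βt})`, which tends to `β / q`.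
-/

open Filter Set Real Topology

theorem HasDerivWithinAt.norm_sq_of_eq_smul {F : Type*} [NormedAddCommGroup F]
    [InnerProductSpace ℝ F] {f : ℝ → F} {c : ℝ} {s : Set ℝ} {t : ℝ}
    (hf : HasDerivWithinAt f (c • f t) s t) :
    HasDerivWithinAt (‖f ·‖ ^ 2) (2 * c * ‖f t‖ ^ 2) s t := by
  simpa [real_inner_smul_right, real_inner_self_eq_norm_sq, mul_assoc] using hf.norm_sq

theorem EuclideanSpace.hasDerivWithinAt_norm_sq_of_eq_smul {𝕜 ι : Type*} [RCLike 𝕜] [Fintype ι]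
    {f : ℝ → EuclideanSpace 𝕜 ι} {c : ℝ} {s : Set ℝ} {t : ℝ}
    (hf : ∀ i, HasDerivWithinAt (fun u => f u i) (c • f t i) s t) :
    HasDerivWithinAt (‖f ·‖ ^ 2) (2 * c * ‖f t‖ ^ 2) s t := by
  simp_rw [EuclideanSpace.norm_sq_eq, Finset.mul_sum]
  exact HasDerivWithinAt.fun_sum fun i _ => (hf i).norm_sq_of_eq_smul

theorem eqOn_zero_of_hasDerivWithinAt_eq_smul {E : Type*} [NormedAddCommGroup E]
    [NormedSpace ℝ E] {c : ℝ → ℝ} {f : ℝ → E} {a b : ℝ} (hc : ContinuousOn c (Icc a b))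
    (hf : ContinuousOn f (Icc a b)) (hf' : ∀ t ∈ Ico a b, HasDerivWithinAt f (c t • f t) (Ici t) t)
    (ha : f a = 0) : EqOn f 0 (Icc a b) := by
  obtain ⟨K, hK⟩ := isCompact_Icc.exists_bound_of_continuousOn hc
  refine eq_zero_of_abs_deriv_le_mul_abs_self_of_eq_zero_right (K := K) hf hf' ha fun t ht => ?_
  rw [norm_smul]
  exact mul_le_mul_of_nonneg_right (hK t (Ico_subset_Icc_self ht)) (norm_nonneg _)

section Logistic

variable {a b : ℝ}

theorem eqOn_of_logistic {t₀ : ℝ} {y z : ℝ → ℝ}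
    (hy : ∀ t ∈ Ici t₀, HasDerivWithinAt y ((a - b * y t) * y t) (Ici t₀) t)
    (hz : ∀ t ∈ Ici t₀, HasDerivWithinAt z ((a - b * z t) * z t) (Ici t₀) t)
    (h₀ : y t₀ = z t₀) : EqOn y z (Ici t₀) := by
  intro T hT
  have hsub : Icc t₀ T ⊆ Ici t₀ := Icc_subset_Ici_self
  have hyc : ContinuousOn y (Icc t₀ T) := fun t ht => (hy t ht.1).continuousWithinAt.mono hsub
  have hzc : ContinuousOn z (Icc t₀ T) := fun t ht => (hz t ht.1).continuousWithinAt.mono hsub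
  have hlin : ∀ t ∈ Ico t₀ T,
      HasDerivWithinAt (y - z) ((a - b * (y t + z t)) • (y - z) t) (Ici t) t := fun t ht =>
    (((hy t ht.1).sub (hz t ht.1)).mono (Ici_subset_Ici.2 ht.1)).congr_deriv
      (by simp only [Pi.sub_apply, smul_eq_mul]; ring)
  exact sub_eq_zero.1 <| eqOn_zero_of_hasDerivWithinAt_eq_smul (by fun_prop) (hyc.sub hzc) hlin
    (sub_eq_zero.2 h₀) ⟨hT, le_rfl⟩

/-- The solution of `y' = (a - b y) y` with `y 0 = y₀`. -/
noncomputable def logisticSolution (a b y₀ t : ℝ) : ℝ :=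
  a * y₀ / (b * y₀ + (a - b * y₀) * exp (-(a * t)))

theorem logisticSolution_zero {y₀ : ℝ} (ha : a ≠ 0) : logisticSolution a b y₀ 0 = y₀ := by
  simp [logisticSolution, ha]

theorem hasDerivAt_logisticSolution {y₀ t : ℝ} (ha : 0 < a) (hb : 0 ≤ b) (hy₀ : 0 ≤ y₀)
    (ht : 0 ≤ t) :
    HasDerivAt (logisticSolution a b y₀)
      ((a - b * logisticSolution a b y₀ t) * logisticSolution a b y₀ t) t := by
  have hexp : HasDerivAt (fun t => exp (-(a * t))) (exp (-(a * t)) * -a) t := by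
    simpa using ((hasDerivAt_id t).const_mul a).fun_neg.exp
  set D := b * y₀ + (a - b * y₀) * exp (-(a * t)) with hD
  -- `D = b y₀ (1 - e) + a e` with `0 < e ≤ 1`
  have hDpos : 0 < D := by
    have he : exp (-(a * t)) ≤ 1 := exp_le_one_iff.2 (by nlinarith)
    have : 0 < a * exp (-(a * t)) := by positivity
    nlinarith [mul_nonneg hb hy₀]
  refine ((hasDerivAt_const t (a * y₀)).div ((hexp.const_mul (a - b * y₀)).const_add (b * y₀))
    hDpos.ne').congr_deriv ?_
  simp only [logisticSolution, ← hD]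
  field_simp
  linear_combination (-(a ^ 2 * y₀)) * hD

theorem tendsto_logisticSolution {y₀ : ℝ} (ha : 0 < a) (hb : b ≠ 0) (hy₀ : y₀ ≠ 0) :
    Tendsto (logisticSolution a b y₀) atTop (𝓝 (a / b)) := by
  have he : Tendsto (fun t => exp (-(a * t))) atTop (𝓝 0) :=
    tendsto_exp_neg_atTop_nhds_zero.comp (tendsto_id.const_mul_atTop ha)
  have hD := (tendsto_const_nhds (x := b * y₀)).add (he.const_mul (a - b * y₀))
  rw [mul_zero, add_zero] at hD
  have hφ := (tendsto_const_nhds (x := a * y₀)).div hD (mul_ne_zero hb hy₀)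
  rwa [mul_div_mul_right _ _ hy₀] at hφ

theorem tendsto_of_logistic {y : ℝ → ℝ} (ha : 0 < a) (hb : 0 < b) (hy₀ : 0 < y 0)
    (hy : ∀ t ∈ Ici 0, HasDerivWithinAt y ((a - b * y t) * y t) (Ici 0) t) :
    Tendsto y atTop (𝓝 (a / b)) := by
  have hsol : EqOn y (logisticSolution a b (y 0)) (Ici 0) :=
    eqOn_of_logistic hy
      (fun t ht => (hasDerivAt_logisticSolution ha hb.le hy₀.le ht).hasDerivWithinAt)
      (logisticSolution_zero ha.ne').symm
  exact (tendsto_logisticSolution ha hb.ne' hy₀.ne').congr'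
    (eventually_ge_atTop 0 |>.mono fun t ht => (hsol ht).symm)

end Logistic

theorem norm_sq_tendsto_beta_div_q_general (N : ℕ) (β q : ℝ) (hβ : 0 < β)
    (hq : 0 < q) (x : ℝ → EuclideanSpace ℂ (Fin N))
    (hode : ∀ (m : Fin N), ∀ t ∈ Set.Ici (0 : ℝ),
      HasDerivWithinAt (fun s => x s m)
        ((β : ℂ) * x t m - (q : ℂ) * x t m * ((‖x t‖ ^ 2 : ℝ) : ℂ)) (Set.Ici (0 : ℝ)) t)
    (h0 : x 0 ≠ 0) :
    Tendsto (fun t : ℝ => ‖x t‖ ^ 2) atTop (nhds (β / q)) := by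
  have hlogistic : ∀ t ∈ Ici (0 : ℝ), HasDerivWithinAt (fun s => ‖x s‖ ^ 2)
      ((2 * β - 2 * q * ‖x t‖ ^ 2) * ‖x t‖ ^ 2) (Ici 0) t := fun t ht =>
    (EuclideanSpace.hasDerivWithinAt_norm_sq_of_eq_smul (c := β - q * ‖x t‖ ^ 2) fun m =>
      (hode m t ht).congr_deriv (by rw [Complex.real_smul]; push_cast; ring)).congr_deriv (by ring)
  have hpos : 0 < ‖x 0‖ ^ 2 := by positivity [norm_pos_iff.2 h0]
  simpa [mul_div_mul_left] using
    tendsto_of_logistic (by positivity) (by positivity) hpos hlogistic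

/-- If `x : [0, ∞) → ℂ^N` is differentiable, each component satisfies
`x_m' = β·x_m − q·x_m·‖x‖²` with `β, q > 0`, and `x(0) ≠ 0`, then `‖x t‖² → β/q`
as `t → ∞`. -/
theorem norm_sq_tendsto_beta_div_q (N : ℕ) (hN : 1 ≤ N) (β q : ℝ) (hβ : 0 < β)
    (hq : 0 < q) (x : ℝ → EuclideanSpace ℂ (Fin N))
    (hode : ∀ (m : Fin N), ∀ t ∈ Set.Ici (0 : ℝ),
      HasDerivWithinAt (fun s => x s m)
        ((β : ℂ) * x t m - (q : ℂ) * x t m * ((‖x t‖ ^ 2 : ℝ) : ℂ)) (Set.Ici (0 : ℝ)) t)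
    (h0 : x 0 ≠ 0) :
    Tendsto (fun t : ℝ => ‖x t‖ ^ 2) atTop (nhds (β / q)) :=
  norm_sq_tendsto_beta_div_q_general N β q hβ hq x hode h0
end
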